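/- Let P ⊆ ℝⁿ be a Delone set of finite local complexity, let φ : ℝⁿ → ℝⁿ be continuous, let g be an invertible linear map of ℝⁿ, and suppose φ − g is weakly P-equivariant. Then the map sending P − x to φ(P) − g(x) is uniformly continuous with respect to the pattern metric D: for every ε > 0 there exists δ > 0 such that for all x, y ∈ ℝⁿ, D(P − x, P − y) < δ implies D(φ(P) − g(x), φ(P) − g(y)) < ε. -/

import Mathlib

open Metric Set

noncomputable section

/-- Euclidean space ℝⁿ. -/
abbrev Euc (n : ℕ) := EuclideanSpace ℝ (Fin n)

/-- The translate `P - x = {p - x : p ∈ P}`. -/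
def shiftSet {n : ℕ} (P : Set (Euc n)) (x : Euc n) : Set (Euc n) :=
  (fun p => p - x) '' P

/-- The `r`-patch of `P` around `x`: `B_r[P - x] = B(0,r) ∩ (P - x)`. -/
def patch {n : ℕ} (P : Set (Euc n)) (r : ℝ) (x : Euc n) : Set (Euc n) :=
  ball (0 : Euc n) r ∩ shiftSet P x

/-- `P` is uniformly discrete: there is a positive minimal distance between points. -/
def UnifDiscrete {n : ℕ} (P : Set (Euc n)) : Prop :=
  ∃ δ > 0, ∀ p ∈ P, ∀ q ∈ P, p ≠ q → δ ≤ ‖p - q‖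

/-- `P` is relatively dense: every ball of radius `R` contains a point of `P`. -/
def RelDense {n : ℕ} (P : Set (Euc n)) : Prop :=
  ∃ R > 0, ∀ x : Euc n, ∃ p ∈ P, ‖p - x‖ < R

/-- `P` has finite local complexity: for each `r > 0`, only finitely many `r`-patches
around points of `P`. -/
def FLC {n : ℕ} (P : Set (Euc n)) : Prop :=
  ∀ r > 0, {s : Set (Euc n) | ∃ x ∈ P, s = patch P r x}.Finite

/-- `f` is `P`-equivariant with range `R`. -/
def EquivRange {n : ℕ} {F : Type*} (P : Set (Euc n)) (R : ℝ) (f : Euc n → F) : Prop :=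
  ∀ x y : Euc n, patch P R x = patch P R y → f x = f y

/-- `f` is strongly `P`-equivariant: `P`-equivariant with some finite range `R > 0`. -/
def StrongEquiv {n : ℕ} {F : Type*} (P : Set (Euc n)) (f : Euc n → F) : Prop :=
  ∃ R > 0, EquivRange P R f

/-- `f`, viewed as a function on the subset `Q`, is `P`-equivariant with range `R`. -/
def EquivRangeOn {n : ℕ} {F : Type*} (P Q : Set (Euc n)) (R : ℝ) (f : Euc n → F) : Prop :=
  ∀ x ∈ Q, ∀ y ∈ Q, patch P R x = patch P R y → f x = f y

/-- `f`, viewed as a function on the subset `Q`, is strongly `P`-equivariant. -/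
def StrongEquivOn {n : ℕ} {F : Type*} (P Q : Set (Euc n)) (f : Euc n → F) : Prop :=
  ∃ R > 0, EquivRangeOn P Q R f

/-- `Q` is locally derivable from `P`. -/
def LocallyDerivable {n : ℕ} (P Q : Set (Euc n)) : Prop :=
  ∃ R > 0, ∀ x y : Euc n, patch P R x = patch P R y →
    ({0} : Set (Euc n)) ∩ shiftSet Q x = ({0} : Set (Euc n)) ∩ shiftSet Q y

/-- Hypothesis (H): for every `r > 0` there is `r' > 0` such that for all `x`,
`B(φ(x), r) ∩ φ(P) ⊆ φ(B(x, r') ∩ P)`. -/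
def HypoH {n : ℕ} (P : Set (Euc n)) (φ : Euc n → Euc n) : Prop :=
  ∀ r > 0, ∃ r' > 0, ∀ x : Euc n, ball (φ x) r ∩ (φ '' P) ⊆ φ '' (ball x r' ∩ P)

/-- The pattern metric `D` on closed subsets of ℝⁿ. -/
def patternDist {n : ℕ} (A B : Set (Euc n)) : ℝ :=
  sInf {ε : ℝ | 0 < ε ∧ Metric.hausdorffDist
    ((ball (0 : Euc n) (1 / ε) ∩ A) ∪ sphere (0 : Euc n) (1 / ε))
    ((ball (0 : Euc n) (1 / ε) ∩ B) ∪ sphere (0 : Euc n) (1 / ε)) ≤ ε}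

/-- A continuous `f : ℝⁿ → ℝⁿ` is weakly `P`-equivariant if it is uniformly approximated
by strongly `P`-equivariant continuous functions. -/
def WeakEquiv {n : ℕ} (P : Set (Euc n)) (f : Euc n → Euc n) : Prop :=
  ∀ ε > 0, ∃ g : Euc n → Euc n, Continuous g ∧ StrongEquiv P g ∧ ∀ x : Euc n, ‖f x - g x‖ < ε

/-- `P` is aperiodic: the only translation fixing `P` is `0`. -/
def IsAperiodicSet {n : ℕ} (P : Set (Euc n)) : Prop :=
  ∀ x : Euc n, shiftSet P x = P → x = 0



/-!
Approximate `φ - g` within `ε / 8` by a continuous `h` that is `P`-equivariant with range `R`.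
By finite local complexity and relative density, `h` only takes the values it takes on finitely
many compact balls, so `h`, and with it `φ - g`, is bounded; hence a point `φ p - g x` of bounded
norm comes from a point `p - x` of bounded norm. If `P - x` and `P - y` are `D`-close, such a point
is matched by some `p' - y`, and then all of `P - p` and `P - p'` up to radius `R` are nearly
matched. Finite local complexity leaves only finitely many vectors in these patches, so a small
enough mismatch forces `B_R[P - p] = B_R[P - p']` and thus `h p = h p'`. Consequently
`φ p - g x` and `φ p' - g y` differ by `g ((p - x) - (p' - y))` plus two approximation errors.
-/

open Filter Topology

section MetricFacts

variable {X : Type*} [MetricSpace X]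

theorem TotallyBounded.finite_of_le_dist {s : Set X} (hs : TotallyBounded s) {δ : ℝ}
    (hδ : 0 < δ) (hsep : ∀ u ∈ s, ∀ v ∈ s, u ≠ v → δ ≤ dist u v) : s.Finite := by
  obtain ⟨t, ht, hcover⟩ := Metric.totallyBounded_iff.1 hs (δ / 2) (half_pos hδ)
  have hsub : s ⊆ ⋃ y ∈ t, s ∩ ball y (δ / 2) := fun u hu => by
    obtain ⟨y, hy, huy⟩ := mem_iUnion₂.1 (hcover hu)
    exact mem_iUnion₂.2 ⟨y, hy, hu, huy⟩
  refine (ht.biUnion fun y _ => Subsingleton.finite ?_).subset hsub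
  rintro u ⟨hu, huy⟩ v ⟨hv, hvy⟩
  by_contra huv
  have := dist_triangle_right u v y
  linarith [hsep u hu v hv huv, mem_ball.1 huy, mem_ball.1 hvy]

theorem Set.Finite.exists_pos_eq_of_dist_lt {s : Set X} (hs : s.Finite) :
    ∃ η > 0, ∀ u ∈ s, ∀ v ∈ s, dist u v < η → u = v := by
  have h : ∀ᶠ η in 𝓝[>] (0 : ℝ), ∀ u ∈ s, ∀ v ∈ s, dist u v < η → u = v := by
    refine hs.eventually_all.2 fun u _ => hs.eventually_all.2 fun v _ => ?_
    rcases eq_or_ne u v with rfl | huv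
    · exact .of_forall fun _ _ => rfl
    · filter_upwards [nhdsWithin_le_nhds (eventually_le_nhds (dist_pos.2 huv))]
        with η hη hlt using absurd hlt (not_lt.2 hη)
  obtain ⟨η, hsep, hη⟩ := (h.and self_mem_nhdsWithin).exists
  exact ⟨η, hη, hsep⟩

end MetricFacts

theorem exists_mem_sphere_dist_eq_sub {E : Type*} [NormedAddCommGroup E] [NormedSpace ℝ E]
    [Nontrivial E] {v : E} {r : ℝ} (hv : ‖v‖ ≤ r) :
    ∃ w ∈ sphere (0 : E) r, dist v w = r - ‖v‖ := by
  rcases eq_or_ne v 0 with rfl | hv0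
  · obtain ⟨w, hw⟩ := (NormedSpace.sphere_nonempty (x := (0 : E))).2 (norm_zero (E := E) ▸ hv)
    refine ⟨w, hw, ?_⟩
    rw [dist_zero_left, mem_sphere_zero_iff_norm.1 hw, norm_zero, sub_zero]
  · have hv' : 0 < ‖v‖ := norm_pos_iff.2 hv0
    refine ⟨(r / ‖v‖) • v, ?_, ?_⟩
    · rw [mem_sphere_zero_iff_norm, norm_smul,
        Real.norm_of_nonneg (div_nonneg (hv'.le.trans hv) hv'.le), div_mul_cancel₀ _ hv'.ne']
    · rw [dist_eq_norm, show v - (r / ‖v‖) • v = (1 - r / ‖v‖) • v by rw [sub_smul, one_smul],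
        norm_smul, Real.norm_eq_abs, abs_of_nonpos (by rw [sub_nonpos, one_le_div hv']; exact hv)]
      field_simp
      ring

section Patches

variable {n : ℕ} {P : Set (Euc n)}

theorem mem_patch {r : ℝ} {x v : Euc n} : v ∈ patch P r x ↔ ‖v‖ < r ∧ ∃ p ∈ P, p - x = v := by
  rw [patch, mem_inter_iff, mem_ball_zero_iff]
  rfl

theorem UnifDiscrete.finite_patch (hUD : UnifDiscrete P) (r : ℝ) (x : Euc n) :
    (patch P r x).Finite := by
  obtain ⟨δ, hδ, hsep⟩ := hUD
  refine ((isCompact_closedBall 0 r).totallyBounded.subset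
    (inter_subset_left.trans ball_subset_closedBall)).finite_of_le_dist hδ ?_
  rintro _ ⟨-, p, hp, rfl⟩ _ ⟨-, q, hq, rfl⟩ hne
  rw [dist_sub_right, dist_eq_norm]
  exact hsep p hp q hq fun h => hne (h ▸ rfl)

theorem FLC.finite_image_patch (hFLC : FLC P) {r : ℝ} (hr : 0 < r) : (patch P r '' P).Finite :=
  (hFLC r hr).subset fun _ ⟨x, hx, hs⟩ => ⟨x, hx, hs.symm⟩

theorem patch_add_eq {r s : ℝ} {a v : Euc n} (hv : ‖v‖ + s ≤ r) :
    patch P s (a + v) = ball 0 s ∩ ((· - v) '' patch P r a) := by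
  ext u
  simp only [mem_patch, mem_inter_iff, mem_ball_zero_iff, mem_image]
  constructor
  · rintro ⟨hu, p, hp, rfl⟩
    refine ⟨hu, p - a, ⟨?_, p, hp, rfl⟩, by abel⟩
    calc ‖p - a‖ = ‖(p - (a + v)) + v‖ := by congr 1; abel
      _ ≤ ‖p - (a + v)‖ + ‖v‖ := norm_add_le _ _
      _ < r := by linarith
  · rintro ⟨hu, _, ⟨-, p, hp, rfl⟩, rfl⟩
    exact ⟨hu, p, hp, by abel⟩

theorem patch_add_eq_of_patch_eq {r s : ℝ} {a b : Euc n} (h : patch P r a = patch P r b)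
    {v : Euc n} (hv : ‖v‖ + s ≤ r) : patch P s (a + v) = patch P s (b + v) := by
  rw [patch_add_eq hv, patch_add_eq hv, h]

end Patches

section Boundedness

variable {n : ℕ} {P : Set (Euc n)}

theorem StrongEquiv.isBounded_range {F : Type*} [PseudoMetricSpace F] (hRD : RelDense P)
    (hFLC : FLC P) {f : Euc n → F} (hc : Continuous f) (hf : StrongEquiv P f) :
    Bornology.IsBounded (range f) := by
  obtain ⟨R, hR, hf⟩ := hf
  obtain ⟨ρ, hρ, hdense⟩ := hRD
  obtain ⟨T, -, hbij⟩ := exists_subset_bijOn P (patch P (R + ρ))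
  have hTfin : T.Finite :=
    Finite.of_finite_image (hbij.image_eq ▸ hFLC.finite_image_patch (by positivity)) hbij.injOn
  refine ((hTfin.isCompact_biUnion fun t _ => isCompact_closedBall t ρ).image hc).isBounded.subset
    ?_
  rintro _ ⟨z, rfl⟩
  obtain ⟨p, hp, hpz⟩ := hdense z
  obtain ⟨t, ht, htp⟩ := hbij.surjOn (mem_image_of_mem _ hp)
  have hzp : ‖z - p‖ < ρ := by rwa [norm_sub_rev]
  refine ⟨t + (z - p), mem_iUnion₂.2 ⟨t, ht, ?_⟩, hf _ _ ?_⟩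
  · rw [mem_closedBall, dist_eq_norm, add_sub_cancel_left]
    exact hzp.le
  · rw [patch_add_eq_of_patch_eq htp (by linarith), add_sub_cancel]

theorem WeakEquiv.isBounded_range (hRD : RelDense P) (hFLC : FLC P) {f : Euc n → Euc n}
    (hf : WeakEquiv P f) : Bornology.IsBounded (range f) := by
  obtain ⟨h, hc, hh, hfh⟩ := hf 1 one_pos
  refine ((hh.isBounded_range hRD hFLC hc).thickening (δ := 1)).subset ?_
  rintro _ ⟨z, rfl⟩
  exact mem_thickening_iff.2 ⟨h z, mem_range_self z, by rw [dist_eq_norm]; exact hfh z⟩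

end Boundedness

section LocallyNear

variable {E : Type*} [SeminormedAddCommGroup E]

def LocallyNear (ρ δ : ℝ) (A B : Set E) : Prop :=
  ∀ a ∈ A, ‖a‖ < ρ → ∃ b ∈ B, ‖a - b‖ < δ

theorem LocallyNear.mono {ρ ρ' δ δ' : ℝ} {A B : Set E} (h : LocallyNear ρ δ A B) (hρ : ρ' ≤ ρ)
    (hδ : δ ≤ δ') : LocallyNear ρ' δ' A B := fun a ha haρ =>
  (h a ha (haρ.trans_le hρ)).imp fun _ ⟨hb, hab⟩ => ⟨hb, hab.trans_le hδ⟩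

end LocallyNear

theorem LocallyNear.recenter {n : ℕ} {P : Set (Euc n)} {ρ δ δ' : ℝ} {a b p p' : Euc n}
    (h : LocallyNear ρ δ (shiftSet P a) (shiftSet P b)) (hp : ‖(p - a) - (p' - b)‖ < δ') :
    LocallyNear (ρ - ‖p - a‖) (δ + δ') (shiftSet P p) (shiftSet P p') := by
  rintro _ ⟨q, hq, rfl⟩ hqp
  have hqa : ‖q - a‖ < ρ := calc
    ‖q - a‖ = ‖(q - p) + (p - a)‖ := by congr 1; abel
    _ ≤ ‖q - p‖ + ‖p - a‖ := norm_add_le _ _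
    _ < ρ := by linarith
  obtain ⟨_, ⟨q', hq', rfl⟩, hqq'⟩ := h (q - a) ⟨q, hq, rfl⟩ hqa
  refine ⟨q' - p', ⟨q', hq', rfl⟩, ?_⟩
  calc ‖q - p - (q' - p')‖ = ‖(q - a - (q' - b)) - (p - a - (p' - b))‖ := by congr 1; abel
    _ ≤ ‖q - a - (q' - b)‖ + ‖p - a - (p' - b)‖ := norm_sub_le _ _
    _ < δ + δ' := add_lt_add hqq' hp

section PatternDist

variable {n : ℕ}

def patternWindow (r : ℝ) (A : Set (Euc n)) : Set (Euc n) := (ball 0 r ∩ A) ∪ sphere 0 r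

theorem patternDist_eq (A B : Set (Euc n)) : patternDist A B =
    sInf {ε | 0 < ε ∧ hausdorffDist (patternWindow (1 / ε) A) (patternWindow (1 / ε) B) ≤ ε} :=
  rfl

theorem patternDist_comm (A B : Set (Euc n)) : patternDist A B = patternDist B A := by
  simp only [patternDist_eq, hausdorffDist_comm]

theorem patternDist_self (A : Set (Euc n)) : patternDist A A = 0 := by
  simp only [patternDist_eq, hausdorffDist_self_zero]
  rw [show {ε : ℝ | 0 < ε ∧ 0 ≤ ε} = Ioi 0 from ext fun _ => and_iff_left_of_imp le_of_lt,
    csInf_Ioi]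

theorem patternDist_le {A B : Set (Euc n)} {e : ℝ} (he : 0 < e)
    (h : hausdorffDist (patternWindow (1 / e) A) (patternWindow (1 / e) B) ≤ e) :
    patternDist A B ≤ e :=
  csInf_le ⟨0, fun _ hε => hε.1.le⟩ ⟨he, h⟩

variable [Nontrivial (Euc n)]

theorem hausdorffEDist_patternWindow_ne_top {r : ℝ} (hr : 0 ≤ r) (A B : Set (Euc n)) :
    hausdorffEDist (patternWindow r A) (patternWindow r B) ≠ ⊤ := by
  have hne : ∀ C, (patternWindow r C).Nonempty := fun C =>
    ((NormedSpace.sphere_nonempty (x := (0 : Euc n))).2 hr).mono subset_union_right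
  have hbdd : ∀ C : Set (Euc n), Bornology.IsBounded (patternWindow r C) := fun C =>
    (isBounded_ball.subset inter_subset_left).union isBounded_sphere
  exact hausdorffEDist_ne_top_of_nonempty_of_bounded (hne A) (hne B) (hbdd A) (hbdd B)

theorem hausdorffDist_patternWindow_le {r : ℝ} (hr : 0 ≤ r) (A B : Set (Euc n)) :
    hausdorffDist (patternWindow r A) (patternWindow r B) ≤ r := by
  have key : ∀ C C' : Set (Euc n), ∀ v ∈ patternWindow r C,
      ∃ w ∈ patternWindow r C', dist v w ≤ r := by
    intro C C' v hv
    have hvr : ‖v‖ ≤ r := by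
      rcases hv with ⟨hv, -⟩ | hv
      · exact (mem_ball_zero_iff.1 hv).le
      · exact (mem_sphere_zero_iff_norm.1 hv).le
    obtain ⟨w, hw, hvw⟩ := exists_mem_sphere_dist_eq_sub hvr
    exact ⟨w, Or.inr hw, by linarith [norm_nonneg v]⟩
  exact hausdorffDist_le_of_mem_dist hr (key A B) (key B A)

theorem locallyNear_of_patternDist_lt {A B : Set (Euc n)} {δ : ℝ} (h : patternDist A B < δ) :
    LocallyNear (1 / δ - δ) δ A B := by
  rw [patternDist_eq] at h
  obtain ⟨ε, ⟨hε, hd⟩, hεδ⟩ := exists_lt_of_csInf_lt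
    (by exact ⟨1, one_pos, by simpa using hausdorffDist_patternWindow_le zero_le_one A B⟩) h
  intro a ha haδ
  have hδε : 1 / δ < 1 / ε := one_div_lt_one_div_of_lt hε hεδ
  have haw : a ∈ patternWindow (1 / ε) A := Or.inl ⟨mem_ball_zero_iff.2 (by linarith), ha⟩
  obtain ⟨u, hu, hau⟩ := exists_dist_lt_of_hausdorffDist_lt haw (hd.trans_lt hεδ)
    (hausdorffEDist_patternWindow_ne_top (by positivity) A B)
  rw [dist_eq_norm] at hau
  have hu_norm : ‖u‖ < 1 / δ := by linarith [norm_le_norm_add_norm_sub a u]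
  rcases hu with ⟨-, hu⟩ | hu
  · exact ⟨u, hu, hau⟩
  · linarith [mem_sphere_zero_iff_norm.1 hu]

theorem LocallyNear.exists_mem_patternWindow {A B : Set (Euc n)} {e : ℝ} (he : 0 ≤ e)
    (h : LocallyNear (1 / e - e) e A B) :
    ∀ v ∈ patternWindow (1 / e) A, ∃ w ∈ patternWindow (1 / e) B, dist v w ≤ e := by
  rintro v (⟨hv, hvA⟩ | hv)
  · rw [mem_ball_zero_iff] at hv
    by_cases hve : ‖v‖ < 1 / e - e
    · obtain ⟨w, hw, hvw⟩ := h v hvA hve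
      refine ⟨w, Or.inl ⟨mem_ball_zero_iff.2 ?_, hw⟩, (dist_eq_norm v w).trans_le hvw.le⟩
      linarith [norm_le_norm_add_norm_sub v w]
    · obtain ⟨w, hw, hvw⟩ := exists_mem_sphere_dist_eq_sub hv.le
      exact ⟨w, Or.inr hw, by linarith⟩
  · exact ⟨v, Or.inr hv, (dist_self v).trans_le he⟩

theorem patternDist_le_of_locallyNear {A B : Set (Euc n)} {e : ℝ} (he : 0 < e)
    (hAB : LocallyNear (1 / e - e) e A B) (hBA : LocallyNear (1 / e - e) e B A) :
    patternDist A B ≤ e :=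
  patternDist_le he <| hausdorffDist_le_of_mem_dist he.le (hAB.exists_mem_patternWindow he.le)
    fun v hv => (hBA.exists_mem_patternWindow he.le v hv).imp fun w ⟨hw, hvw⟩ =>
      ⟨hw, dist_comm v w ▸ hvw⟩

end PatternDist

section Rigidity

variable {n : ℕ} {P : Set (Euc n)}

theorem exists_patch_eq_of_locallyNear (hUD : UnifDiscrete P) (hFLC : FLC P) {R : ℝ}
    (hR : 0 ≤ R) : ∃ η > 0, ∀ p ∈ P, ∀ p' ∈ P,
      LocallyNear R η (shiftSet P p) (shiftSet P p') →
      LocallyNear R η (shiftSet P p') (shiftSet P p) → patch P R p = patch P R p' := by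
  set K := ⋃₀ (patch P (R + 1) '' P)
  have hK : K.Finite := (hFLC.finite_image_patch (by positivity)).sUnion
    (forall_mem_image.2 fun x _ => hUD.finite_patch _ x)
  obtain ⟨η, hη, hsep⟩ := hK.exists_pos_eq_of_dist_lt
  have hsub : ∀ p ∈ P, ∀ p' ∈ P, LocallyNear R (min η 1) (shiftSet P p) (shiftSet P p') →
      patch P R p ⊆ patch P R p' := by
    rintro p hp p' hp' hnear v ⟨hvR, hv⟩
    rw [mem_ball_zero_iff] at hvR
    obtain ⟨v', hv', hvv'⟩ := hnear v hv hvR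
    have hv'R : ‖v'‖ < R + 1 := by
      linarith [norm_le_norm_add_norm_sub v v', min_le_right η 1]
    have hvK : v ∈ K := ⟨_, mem_image_of_mem _ hp, mem_ball_zero_iff.2 (by linarith), hv⟩
    have hv'K : v' ∈ K := ⟨_, mem_image_of_mem _ hp', mem_ball_zero_iff.2 hv'R, hv'⟩
    have hvv'η : dist v v' < η := by rw [dist_eq_norm]; exact hvv'.trans_le (min_le_left η 1)
    rw [hsep v hvK v' hv'K hvv'η] at hvR ⊢
    exact ⟨mem_ball_zero_iff.2 hvR, hv'⟩
  exact ⟨min η 1, by positivity, fun p hp p' hp' h₁ h₂ =>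
    (hsub p hp p' hp' h₁).antisymm (hsub p' hp' p hp h₂)⟩

end Rigidity

theorem LocallyNear.image {n : ℕ} {P : Set (Euc n)} {φ h : Euc n → Euc n}
    {g : Euc n ≃L[ℝ] Euc n} {R M η κ r ρ δ : ℝ} {a b : Euc n}
    (hrigid : ∀ p ∈ P, ∀ p' ∈ P, LocallyNear R η (shiftSet P p) (shiftSet P p') →
      LocallyNear R η (shiftSet P p') (shiftSet P p) → patch P R p = patch P R p')
    (hh : EquivRange P R h) (hM : ∀ z, ‖φ z - g z‖ ≤ M) (happrox : ∀ z, ‖φ z - g z - h z‖ < κ)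
    (hab : LocallyNear ρ δ (shiftSet P a) (shiftSet P b))
    (hba : LocallyNear ρ δ (shiftSet P b) (shiftSet P a)) (hR : 0 ≤ R) (hδ : 0 < δ)
    (hδη : 2 * δ ≤ η)
    (hρ : ‖(g.symm : Euc n →L[ℝ] Euc n)‖ * (r + M) + R + δ ≤ ρ) :
    LocallyNear r (‖(g : Euc n →L[ℝ] Euc n)‖ * δ + 2 * κ)
      (shiftSet (φ '' P) (g a)) (shiftSet (φ '' P) (g b)) := by
  rintro _ ⟨_, ⟨p, hp, rfl⟩, rfl⟩ hw
  have hpa : ‖p - a‖ ≤ ‖(g.symm : Euc n →L[ℝ] Euc n)‖ * (r + M) := calc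
    ‖p - a‖ = ‖g.symm (g (p - a))‖ := by rw [g.symm_apply_apply]
    _ ≤ ‖(g.symm : Euc n →L[ℝ] Euc n)‖ * ‖g (p - a)‖ := g.symm.toContinuousLinearMap.le_opNorm _
    _ ≤ ‖(g.symm : Euc n →L[ℝ] Euc n)‖ * (r + M) := by
      gcongr
      calc ‖g (p - a)‖ = ‖(φ p - g a) - (φ p - g p)‖ := by rw [map_sub]; congr 1; abel
        _ ≤ ‖φ p - g a‖ + ‖φ p - g p‖ := norm_sub_le _ _
        _ ≤ r + M := by linarith [hM p]
  obtain ⟨_, ⟨p', hp', rfl⟩, hpp'⟩ := hab (p - a) ⟨p, hp, rfl⟩ (by linarith)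
  have hp'b : ‖p' - b‖ < ‖p - a‖ + δ := by linarith [norm_le_norm_add_norm_sub (p - a) (p' - b)]
  have hpatch : patch P R p = patch P R p' := hrigid p hp p' hp'
    ((hab.recenter hpp').mono (by linarith) (by linarith))
    ((hba.recenter (by rwa [norm_sub_rev])).mono (by linarith) (by linarith))
  refine ⟨φ p' - g b, ⟨φ p', mem_image_of_mem φ hp', rfl⟩, ?_⟩
  calc ‖φ p - g a - (φ p' - g b)‖
      = ‖g ((p - a) - (p' - b)) + (φ p - g p - h p) - (φ p' - g p' - h p')‖ := by
        rw [hh p p' hpatch, map_sub, map_sub, map_sub]; congr 1; abel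
    _ ≤ ‖g ((p - a) - (p' - b))‖ + ‖φ p - g p - h p‖ + ‖φ p' - g p' - h p'‖ :=
        norm_sub_le_of_le (norm_add_le _ _) le_rfl
    _ < ‖(g : Euc n →L[ℝ] Euc n)‖ * δ + κ + κ := by
        have hg : ‖g ((p - a) - (p' - b))‖ ≤ ‖(g : Euc n →L[ℝ] Euc n)‖ * δ :=
          (g.toContinuousLinearMap.le_opNorm _).trans (by gcongr)
        linarith [happrox p, happrox p']
    _ = ‖(g : Euc n →L[ℝ] Euc n)‖ * δ + 2 * κ := by ring

theorem eventually_nhdsGT_zero_mul_le (c : ℝ) {b : ℝ} (hb : 0 < b) :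
    ∀ᶠ δ in 𝓝[>] (0 : ℝ), c * δ ≤ b :=
  ((tendsto_id.const_mul c).mono_left nhdsWithin_le_nhds).eventually
    (eventually_le_nhds (by rwa [mul_zero]))

theorem eventually_nhdsGT_zero_add_le_inv (K : ℝ) : ∀ᶠ δ in 𝓝[>] (0 : ℝ), K + 2 * δ ≤ 1 / δ := by
  filter_upwards [eventually_nhdsGT_zero_mul_le 1 one_pos,
    tendsto_inv_nhdsGT_zero.eventually_ge_atTop (K + 2)] with δ hδ1 hKδ
  rw [one_div]
  linarith

theorem stmt11_general {n : ℕ} (P : Set (Euc n))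
    (hUD : UnifDiscrete P) (hRD : RelDense P) (hFLC : FLC P)
    (φ : Euc n → Euc n) (g : Euc n ≃ₗ[ℝ] Euc n)
    (hw : WeakEquiv P (fun x => φ x - g x)) :
    ∀ ε > 0, ∃ δ > 0, ∀ x y : Euc n,
      patternDist (shiftSet P x) (shiftSet P y) < δ →
      patternDist (shiftSet (φ '' P) (g x)) (shiftSet (φ '' P) (g y)) < ε := by
  intro ε hε
  rcases subsingleton_or_nontrivial (Euc n) with _ | _
  · exact ⟨1, one_pos, fun x y _ => by rwa [Subsingleton.elim (g x) (g y), patternDist_self]⟩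
  set G := g.toContinuousLinearEquiv
  set e := ε / 2
  have he : 0 < e := half_pos hε
  obtain ⟨h, -, ⟨R, hR, hh⟩, happrox⟩ := hw (e / 4) (by positivity)
  obtain ⟨M, hM⟩ := isBounded_iff_forall_norm_le.1 (hw.isBounded_range hRD hFLC)
  obtain ⟨η, hη, hrigid⟩ := exists_patch_eq_of_locallyNear hUD hFLC hR.le
  obtain ⟨δ, ⟨hδη, hδG, hδC⟩, hδ⟩ := ((eventually_nhdsGT_zero_mul_le 2 hη).and
    ((eventually_nhdsGT_zero_mul_le ‖(G : Euc n →L[ℝ] Euc n)‖ (half_pos he)).and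
    (eventually_nhdsGT_zero_add_le_inv (‖(G.symm : Euc n →L[ℝ] Euc n)‖ * (1 / e - e + M) + R)))
    |>.and self_mem_nhdsWithin).exists
  have key : ∀ a b, patternDist (shiftSet P a) (shiftSet P b) < δ →
      LocallyNear (1 / e - e) e (shiftSet (φ '' P) (g a)) (shiftSet (φ '' P) (g b)) :=
    fun a b hab => ((locallyNear_of_patternDist_lt hab).image (g := G) hrigid hh
      (fun z => hM _ (mem_range_self z)) happrox
      (locallyNear_of_patternDist_lt (patternDist_comm (shiftSet P a) _ ▸ hab)) hR.le hδ hδη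
      (by linarith)).mono le_rfl (by linarith)
  refine ⟨δ, hδ, fun x y hxy => ?_⟩
  exact (patternDist_le_of_locallyNear he (key x y hxy)
    (key y x (by rwa [patternDist_comm]))).trans_lt (half_lt_self hε)

theorem stmt11 {n : ℕ} (P : Set (Euc n))
    (hUD : UnifDiscrete P) (hRD : RelDense P) (hFLC : FLC P)
    (φ : Euc n → Euc n) (hφ : Continuous φ) (g : Euc n ≃ₗ[ℝ] Euc n)
    (hw : WeakEquiv P (fun x => φ x - g x)) :
    ∀ ε > 0, ∃ δ > 0, ∀ x y : Euc n,
      patternDist (shiftSet P x) (shiftSet P y) < δ →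
      patternDist (shiftSet (φ '' P) (g x)) (shiftSet (φ '' P) (g y)) < ε :=
  stmt11_general P hUD hRD hFLC φ g hw
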